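/- Let d ≥ 1, M ⊆ ℤ^d, and suppose there exists C > 0 such that R_M(n) ≤ C·n^{d−1} for all sufficiently large n. Then for every v ∈ ℤ^d and every ε > 0 there exists n₀ such that for all n ≥ n₀, R_{Bd(M,v)}(n) ≤ (C+ε)·n^{d−1}. -/

import Mathlib

open Classical

noncomputable section

/-- Sup norm of an integer vector. -/
def supNorm {ι : Type} [Fintype ι] (x : ι → ℤ) : ℕ :=
  Finset.univ.sup fun i => (x i).natAbs

/-- The block of size `n` of `M` at `x`. -/
def blockOf {ι : Type} [Fintype ι] (M : Set (ι → ℤ)) (x : ι → ℤ) (n : ℕ) :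
    (ι → Fin n) → Prop :=
  fun w => (fun i => x i + (w i : ℤ)) ∈ M

/-- A block is recurrent if it occurs at points of arbitrarily large norm. -/
def IsRecurrentBlock {ι : Type} [Fintype ι] (M : Set (ι → ℤ)) (n : ℕ)
    (B : (ι → Fin n) → Prop) : Prop :=
  ∀ L : ℕ, ∃ x : ι → ℤ, L ≤ supNorm x ∧ blockOf M x n = B

/-- `R_M(n)`: number of distinct recurrent blocks of size `n`. -/
def recBlockCount {ι : Type} [Fintype ι] (M : Set (ι → ℤ)) (n : ℕ) : ℕ :=
  Set.ncard {B : (ι → Fin n) → Prop | IsRecurrentBlock M n B}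

/-- `p_M(n)`: number of distinct blocks of size `n`. -/
def blockCount {ι : Type} [Fintype ι] (M : Set (ι → ℤ)) (n : ℕ) : ℕ :=
  Set.ncard {B : (ι → Fin n) → Prop | ∃ x, blockOf M x n = B}

/-- Linear subset of `ℤ^ι`. -/
def IsLinearSetInt {ι : Type} [Fintype ι] (S : Set (ι → ℤ)) : Prop :=
  ∃ (x : ι → ℤ) (V : Finset (ι → ℤ)),
    S = {y | ∃ c : (ι → ℤ) → ℕ, y = x + ∑ v ∈ V, (c v : ℤ) • v}

/-- Semilinear = finite union of linear sets. -/
def IsSemilinearSetInt {ι : Type} [Fintype ι] (S : Set (ι → ℤ)) : Prop :=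
  ∃ F : Finset (Set (ι → ℤ)), (∀ T ∈ F, IsLinearSetInt T) ∧ S = ⋃ T ∈ F, T

/-- Section `M_{i,c}` of a subset of `ℤ^(d+1)`. -/
def sectionSet {d : ℕ} (M : Set (Fin (d + 1) → ℤ)) (i : Fin (d + 1)) (c : ℤ) :
    Set (Fin d → ℤ) :=
  {y | i.insertNth c y ∈ M}

/-- Open ball (for the sup norm) of radius `K` centered at `x`. -/
def ball {ι : Type} [Fintype ι] (x : ι → ℤ) (K : ℕ) : Set (ι → ℤ) :=
  {y | supNorm (x - y) < K}

/-- `M` is `v`-periodic inside `X`. -/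
def vPeriodicInside {ι : Type} [Fintype ι] (M : Set (ι → ℤ)) (v : ι → ℤ)
    (X : Set (ι → ℤ)) : Prop :=
  ∀ m : ι → ℤ, m ∈ X → m + v ∈ X → (m ∈ M ↔ m + v ∈ M)

/-- Border of `A` in direction `v`. -/
def border {ι : Type} (A : Set (ι → ℤ)) (v : ι → ℤ) : Set (ι → ℤ) :=
  {x | x ∈ A ∧ x + v ∉ A}

/-- `(d-k)`-dimensional section of `M ⊆ ℤ^d` obtained by fixing the coordinates
in the range of `g` to the corresponding constants `c`. -/
def multiSection {d k : ℕ} (M : Set (Fin d → ℤ)) (g : Fin k → Fin d)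
    (c : Fin k → ℤ) : Set ({j : Fin d // ∀ m, g m ≠ j} → ℤ) :=
  {y | (fun j : Fin d =>
    if h : ∃ m, g m = j then c (Classical.choose h)
    else y ⟨j, fun m hm => h ⟨m, hm⟩⟩) ∈ M}

/-- Repetitivity of a subset of `ℤ^ι`. -/
def Repetitive {ι : Type} [Fintype ι] (M : Set (ι → ℤ)) : Prop :=
  ∀ n : ℕ, 1 ≤ n → ∃ R : ℕ, ∀ x y : ι → ℤ, ∃ z : ι → ℤ,
    supNorm (z - y) ≤ R ∧ blockOf M z n = blockOf M x n

/-- Ideal crystal: `d` linearly independent translation periods. -/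
def IsIdealCrystal {d : ℕ} (M : Set (Fin d → ℤ)) : Prop :=
  ∃ p : Fin d → (Fin d → ℤ), LinearIndependent ℤ p ∧
    ∀ i, (fun x => x + p i) '' M = M

/-! A recurrent block of `Bd(M, v)` of size `n` is read off from a recurrent block of `M` of size
`n + 2‖v‖` (the border at `x` only depends on `M` near `x` and `x + v`), so
`R_{Bd(M,v)}(n) ≤ R_M(n + 2‖v‖) ≤ C (n + 2‖v‖)^{d-1}`, and `(n + a)^{d-1} / n^{d-1} → 1`. -/

open Filter Topology

section Blocks

variable {ι : Type} [Fintype ι]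

lemma natAbs_le_supNorm (x : ι → ℤ) (i : ι) : (x i).natAbs ≤ supNorm x :=
  Finset.le_sup (f := fun j => (x j).natAbs) (Finset.mem_univ i)

lemma supNorm_add_le (x y : ι → ℤ) : supNorm (x + y) ≤ supNorm x + supNorm y :=
  Finset.sup_le fun i _ =>
    (Int.natAbs_add_le (x i) (y i)).trans
      (Nat.add_le_add (natAbs_le_supNorm x i) (natAbs_le_supNorm y i))

/-- Outside the cube `{0,…,m-1}^ι` this is `False`. -/
def blockEval {m : ℕ} (B : (ι → Fin m) → Prop) (p : ι → ℤ) : Prop :=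
  ∃ w : ι → Fin m, (fun i => (w i : ℤ)) = p ∧ B w

lemma blockEval_blockOf_iff (M : Set (ι → ℤ)) (x : ι → ℤ) {m : ℕ} {p : ι → ℤ}
    (hp : ∀ i, 0 ≤ p i ∧ p i < m) : blockEval (blockOf M x m) p ↔ x + p ∈ M := by
  constructor
  · rintro ⟨w, rfl, hw⟩
    exact hw
  · intro hxp
    have hp' : (fun i => ((p i).toNat : ℤ)) = p := funext fun i => Int.toNat_of_nonneg (hp i).1
    refine ⟨fun i => ⟨(p i).toNat, by have := hp i; omega⟩, hp', ?_⟩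
    show (fun i => x i + ((p i).toNat : ℤ)) ∈ M
    rwa [show (fun i => x i + ((p i).toNat : ℤ)) = x + p from congrArg (x + ·) hp']

/-- The block of `Bd(M, v)` of size `n` determined by a block of `M` of size `n + 2‖v‖`
that sits `‖v‖` below it in every coordinate. -/
def borderBlock (v : ι → ℤ) (n : ℕ) {m : ℕ} (B : (ι → Fin m) → Prop) :
    (ι → Fin n) → Prop :=
  fun w =>
    let p : ι → ℤ := fun i => supNorm v + w i
    blockEval B p ∧ ¬ blockEval B (p + v)

lemma blockOf_border_eq (M : Set (ι → ℤ)) (v x : ι → ℤ) (n : ℕ) :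
    blockOf (border M v) x n =
      borderBlock v n (blockOf M (x - fun _ => (supNorm v : ℤ)) (n + 2 * supNorm v)) := by
  funext w
  set p : ι → ℤ := fun i => supNorm v + w i with hp_def
  have hp i : 0 ≤ p i ∧ p i < ↑(n + 2 * supNorm v) := by
    have := (w i).isLt; simp only [hp_def]; omega
  have hpv i : 0 ≤ (p + v) i ∧ (p + v) i < ↑(n + 2 * supNorm v) := by
    have := (w i).isLt; have := natAbs_le_supNorm v i; simp only [hp_def, Pi.add_apply]; omega
  have hx : (x - fun _ => (supNorm v : ℤ)) + p = fun i => x i + w i := by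
    funext i; simp only [hp_def, Pi.add_apply, Pi.sub_apply]; ring
  simp only [borderBlock, ← hp_def]
  rw [blockEval_blockOf_iff M _ hp, blockEval_blockOf_iff M _ hpv, ← add_assoc, hx]
  rfl

lemma recBlockCount_le_of_blockOf_eq {N M : Set (ι → ℤ)} {n m : ℕ} (s : ι → ℤ)
    (F : ((ι → Fin m) → Prop) → (ι → Fin n) → Prop)
    (hF : ∀ x, blockOf N x n = F (blockOf M (x - s) m)) :
    recBlockCount N n ≤ recBlockCount M m := by
  have hsub : {B | IsRecurrentBlock N n B} ⊆ F '' {B' | IsRecurrentBlock M m B'} := by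
    intro B hB
    choose x hx hxB using hB
    -- infinitely many of the far-away occurrences of `B` see the same block of `M`
    obtain ⟨B', hB'⟩ := Finite.exists_infinite_fiber fun L => blockOf M (x L - s) m
    have hfiber := Set.infinite_coe_iff.mp hB'
    refine ⟨B', fun L => ?_, ?_⟩
    · obtain ⟨L', hL', hlt⟩ := hfiber.exists_gt (L + supNorm s)
      refine ⟨x L' - s, ?_, hL'⟩
      have := (hx L').trans (sub_add_cancel (x L') s ▸ supNorm_add_le (x L' - s) s)
      omega
    · obtain ⟨L', hL'⟩ := hfiber.nonempty
      rw [← hxB L', hF, show blockOf M (x L' - s) m = B' from hL']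
  calc recBlockCount N n ≤ (F '' {B' | IsRecurrentBlock M m B'}).ncard :=
        Set.ncard_le_ncard hsub (Set.toFinite _)
    _ ≤ recBlockCount M m := Set.ncard_image_le (Set.toFinite _)

lemma recBlockCount_border_le (M : Set (ι → ℤ)) (v : ι → ℤ) (n : ℕ) :
    recBlockCount (border M v) n ≤ recBlockCount M (n + 2 * supNorm v) :=
  recBlockCount_le_of_blockOf_eq _ _ (blockOf_border_eq M v · n)

end Blocks

lemma eventually_mul_add_pow_le (C : ℝ) {ε : ℝ} (hε : 0 < ε) (a e : ℕ) :
    ∀ᶠ n : ℕ in atTop, C * ((n : ℝ) + a) ^ e ≤ (C + ε) * (n : ℝ) ^ e := by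
  have hlim : Tendsto (fun n : ℕ => C * (1 + (a : ℝ) / n) ^ e) atTop (𝓝 C) := by
    simpa using ((tendsto_const_div_atTop_nhds_zero_nat (a : ℝ)).const_add 1).pow e |>.const_mul C
  filter_upwards [hlim.eventually_lt_const (lt_add_of_pos_right C hε), eventually_gt_atTop 0]
    with n hlt hn
  have hn : (0 : ℝ) < n := Nat.cast_pos.mpr hn
  calc C * ((n : ℝ) + a) ^ e = C * (1 + (a : ℝ) / n) ^ e * (n : ℝ) ^ e := by
        rw [mul_assoc, ← mul_pow, add_mul, div_mul_cancel₀ _ hn.ne', one_mul, add_comm]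
    _ ≤ (C + ε) * (n : ℝ) ^ e := by gcongr

theorem border_complexity_general (d : ℕ) (M : Set (Fin d → ℤ))
    (C : ℝ)
    (hR : ∃ N : ℕ, ∀ n : ℕ, N ≤ n →
      (recBlockCount M n : ℝ) ≤ C * (n : ℝ) ^ (d - 1)) :
    ∀ (v : Fin d → ℤ) (ε : ℝ), 0 < ε → ∃ n₀ : ℕ, ∀ n : ℕ, n₀ ≤ n →
      (recBlockCount (border M v) n : ℝ) ≤ (C + ε) * (n : ℝ) ^ (d - 1) := by
  intro v ε hε
  obtain ⟨N, hN⟩ := hR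
  obtain ⟨n₀, hn₀⟩ := eventually_atTop.mp
    ((eventually_mul_add_pow_le C hε (2 * supNorm v) (d - 1)).and (eventually_ge_atTop N))
  refine ⟨n₀, fun n hn => ?_⟩
  obtain ⟨hpow, hNn⟩ := hn₀ n hn
  calc (recBlockCount (border M v) n : ℝ)
      ≤ recBlockCount M (n + 2 * supNorm v) := by
        exact_mod_cast recBlockCount_border_le M v n
    _ ≤ C * ((n : ℝ) + ↑(2 * supNorm v)) ^ (d - 1) := by
        exact_mod_cast hN (n + 2 * supNorm v) (hNn.trans (Nat.le_add_right _ _))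
    _ ≤ (C + ε) * (n : ℝ) ^ (d - 1) := hpow

/-- Lemma: if `R_M(n) ≤ C·n^{d-1}` for all sufficiently large `n`, then for
every direction `v` and every `ε > 0`, `R_{Bd(M,v)}(n) ≤ (C+ε)·n^{d-1}` for all
sufficiently large `n`. -/
theorem border_complexity (d : ℕ) (hd : 1 ≤ d) (M : Set (Fin d → ℤ))
    (C : ℝ) (hC : 0 < C)
    (hR : ∃ N : ℕ, ∀ n : ℕ, N ≤ n →
      (recBlockCount M n : ℝ) ≤ C * (n : ℝ) ^ (d - 1)) :
    ∀ (v : Fin d → ℤ) (ε : ℝ), 0 < ε → ∃ n₀ : ℕ, ∀ n : ℕ, n₀ ≤ n →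
      (recBlockCount (border M v) n : ℝ) ≤ (C + ε) * (n : ℝ) ^ (d - 1) :=
  border_complexity_general d M C hR
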